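/- Patience Lemma: Let δ_p, δ_q be decision maps for a stabilizing protocol solving a task in the DLL model, i.e., for every admissible DLL pattern the decisions of p and q each stabilize to a final value. Then for every finite prefix π of round graphs there exists k ≥ 0 such that π followed by k silent rounds is a patient prefix: appending any further number of silent rounds does not change either process's decision. Concretely, if the decision of p on π·(none)^r equals its decision on π·(pq)^r (indistinguishability) and the decisions of p along π·(pq)^ω eventually stabilize, and symmetrically for q with qp, then there is k such that for all r ≥ 0, δ_p(π·none^{k+r}) = δ_p(π·none^k) and δ_q(π·none^{k+r}) = δ_q(π·none^k). -/
import Mathlib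


/-- The four possible round graphs in the Delayed Lossy-Link model. -/
inductive DLLGraph : Type
  | pq | qp | pqp | silent
deriving DecidableEq

open DLLGraph in
/-- Patience Lemma: given decision maps of a stabilizing protocol in the DLL,
every finite prefix can be extended by finitely many silent rounds to a
patient prefix, on which appending further silent rounds changes no decision. -/
theorem stmt_7 (O : Type*) (δp δq : List DLLGraph → O)
    -- indistinguishability: p cannot distinguish silence from pq rounds,
    -- q cannot distinguish silence from qp rounds
    (hindp : ∀ (π : List DLLGraph) (r : ℕ),
      δp (π ++ List.replicate r silent) = δp (π ++ List.replicate r pq))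
    (hindq : ∀ (π : List DLLGraph) (r : ℕ),
      δq (π ++ List.replicate r silent) = δq (π ++ List.replicate r qp))
    -- stabilization along the admissible patterns π·(pq)^ω and π·(qp)^ω
    (hstabp : ∀ π : List DLLGraph, ∃ N : ℕ, ∀ r ≥ N,
      δp (π ++ List.replicate r pq) = δp (π ++ List.replicate N pq))
    (hstabq : ∀ π : List DLLGraph, ∃ N : ℕ, ∀ r ≥ N,
      δq (π ++ List.replicate r qp) = δq (π ++ List.replicate N qp)) :
    ∀ π : List DLLGraph, ∃ k : ℕ, ∀ r : ℕ,
      δp (π ++ List.replicate (k + r) silent) = δp (π ++ List.replicate k silent) ∧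
      δq (π ++ List.replicate (k + r) silent) = δq (π ++ List.replicate k silent) := by
  intro π
  obtain ⟨Np, hNp⟩ := hstabp π
  obtain ⟨Nq, hNq⟩ := hstabq π
  refine ⟨max Np Nq, fun r => ⟨?_, ?_⟩⟩
  · rw [hindp, hindp, hNp (max Np Nq + r) (le_trans (le_max_left _ _) (Nat.le_add_right _ _)),
      hNp (max Np Nq) (le_max_left _ _)]
  · rw [hindq, hindq, hNq (max Np Nq + r) (le_trans (le_max_right _ _) (Nat.le_add_right _ _)),
      hNq (max Np Nq) (le_max_right _ _)]
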